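/- arXiv:2002.05027 — 2 statements merged into one kernel-verified Lean document; each statement's English description precedes it below -/
import Mathlib

section
/- (Ideal form of the wheel conditions, first ideal.) For every k ≥ 3 and every d = (d1, …, dk) ∈ ℤ^k, the monomial shuffle element Sh_k(d) lies in the ideal of the Laurent polynomial ring R[z1^{±1}, …, zk^{±1}] generated by q1·z1 − z2 and q2·z2 − z3; that is, there exist Laurent polynomials a, b ∈ R[z1^{±1}, …, zk^{±1}] with Sh_k(d) = a·(q1·z1 − z2) + b·(q2·z2 − z3). -/
open MvPolynomial Finset

noncomputable section

/-- `Fk k` is the field `F_k = ℂ(q1, q2, z1, …, zk)`, realized as the fraction field of the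
polynomial ring `ℂ[q1, q2, z1, …, zk]`. -/
abbrev Fk (k : ℕ) : Type := FractionRing (MvPolynomial (Fin 2 ⊕ Fin k) ℂ)

/-- The indeterminate `q1` in `F_k`. -/
def q1F (k : ℕ) : Fk k := algebraMap (MvPolynomial (Fin 2 ⊕ Fin k) ℂ) (Fk k) (X (Sum.inl 0))

/-- The indeterminate `q2` in `F_k`. -/
def q2F (k : ℕ) : Fk k := algebraMap (MvPolynomial (Fin 2 ⊕ Fin k) ℂ) (Fk k) (X (Sum.inl 1))

/-- The indeterminates `z1, …, zk` in `F_k` (zero-indexed: `zF k i` is `z_{i+1}`). -/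
def zF (k : ℕ) (i : Fin k) : Fk k := algebraMap (MvPolynomial (Fin 2 ⊕ Fin k) ℂ) (Fk k) (X (Sum.inr i))

/-- `ω(x, y) = (x − q·y)(y − q1·x)(y − q2·x)/(x − y)`, where `q = q1·q2`. -/
def omegaF {K : Type*} [Field K] (q1 q2 x y : K) : K :=
  (x - q1 * q2 * y) * (y - q1 * x) * (y - q2 * x) / (x - y)

/-- The monomial shuffle element
`Sh_k(d) = Σ_{σ ∈ S_k} ∏_{i=1}^k z_{σ(i)}^{d_i} · ∏_{1 ≤ i < j ≤ k} ω(z_{σ(i)}, z_{σ(j)})`,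
as a rational expression in the values `z : Fin k → K`. -/
def Sh {K : Type*} [Field K] (q1 q2 : K) {k : ℕ} (z : Fin k → K) (d : Fin k → ℤ) : K :=
  ∑ σ : Equiv.Perm (Fin k), (∏ i, z (σ i) ^ d i) *
    ∏ p ∈ Finset.univ.filter (fun p : Fin k × Fin k => p.1 < p.2),
      omegaF q1 q2 (z (σ p.1)) (z (σ p.2))

/-- The Laurent polynomial subring `R[z1^{±1}, …, zk^{±1}]` of `K`, where
`R = ℂ[q1^{±1}, q2^{±1}]`: the subring generated by the complex constants,
`q1^{±1}`, `q2^{±1}` and the `z_i^{±1}`. -/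
def laurentSubring {K : Type*} [Field K] [Algebra ℂ K] (q1 q2 : K) {k : ℕ} (z : Fin k → K) :
    Subring K :=
  Subring.closure ((Set.range fun c : ℂ => algebraMap ℂ K c) ∪ {q1, q1⁻¹, q2, q2⁻¹} ∪
    Set.range z ∪ Set.range fun i => (z i)⁻¹)

/-- The `ℂ(q1,q2)`-algebra automorphism of `F_k` fixing `q1, q2` and sending `z_i ↦ z_{τ(i)}`. -/
def permAut (k : ℕ) (τ : Equiv.Perm (Fin k)) : Fk k ≃+* Fk k :=
  IsFractionRing.ringEquivOfRingEquiv
    (MvPolynomial.renameEquiv ℂ (Equiv.sumCongr (Equiv.refl (Fin 2)) τ)).toRingEquiv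

/-!
Write `ω(x, y) = N(x, y) / (y - x)` with `N` a polynomial. After shifting `d` by a constant `M`,
which multiplies `Sh_k(d)` by the unit `(z₁ ⋯ z_k)^M`, `Sh_k(d)` is the alternant
`Σ_σ sign σ · F(z ∘ σ)` of `F(z) = ∏ zᵢ^{dᵢ} ∏_{i<j} N(zᵢ, zⱼ)` divided by the Vandermonde
determinant. The alternant vanishes on `zᵢ = zⱼ`, so it is divisible by the pairwise non-associate
primes `zⱼ - zᵢ`, hence by the Vandermonde, and `Sh_k(d) = (z₁ ⋯ z_k)^{-M} B` for a polynomial `B`.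
On the wheel `z₂ = q1 z₁, z₃ = q1 q2 z₁` every `F(z ∘ σ)` has a vanishing factor `N` while the
Vandermonde does not vanish, so `B` vanishes on the wheel and hence lies in the ideal generated by
`z₂ - q1 z₁` and `z₃ - q1 q2 z₁`.
-/

theorem Finset.prod_dvd_of_prime_of_pairwise_not_dvd {ι M₀ : Type*} [CommMonoidWithZero M₀]
    [IsCancelMulZero M₀] [DecidableEq ι] {s : Finset ι} {p : ι → M₀} {n : M₀}
    (hp : ∀ i ∈ s, Prime (p i)) (hs : (s : Set ι).Pairwise fun i j => ¬ p i ∣ p j)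
    (hdvd : ∀ i ∈ s, p i ∣ n) : ∏ i ∈ s, p i ∣ n := by
  induction s using Finset.induction generalizing n with
  | empty => simp
  | insert a s ha ih =>
    obtain ⟨c, rfl⟩ := hdvd a (mem_insert_self a s)
    rw [prod_insert ha]
    refine mul_dvd_mul_left _ (ih (fun i hi => hp i (mem_insert_of_mem hi))
      (hs.mono (by simp)) fun i hi => ?_)
    have hi' : i ∈ insert a s := mem_insert_of_mem hi
    exact ((hp i hi').dvd_or_dvd (hdvd i hi')).resolve_left
      (hs hi' (mem_insert_self a s) (ne_of_mem_of_not_mem hi ha))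

theorem exists_natCast_eq_add_const {ι : Type*} [Fintype ι] (d : ι → ℤ) :
    ∃ (M : ℕ) (n : ι → ℕ), ∀ i, (n i : ℤ) = d i + M := by
  refine ⟨∑ i, (d i).natAbs, fun i => (d i + ∑ j, (d j).natAbs : ℤ).toNat,
    fun i => Int.toNat_of_nonneg ?_⟩
  have := single_le_sum (f := fun j => (d j).natAbs) (fun _ _ => Nat.zero_le _) (mem_univ i)
  omega

open Equiv Matrix

def pairsLT (k : ℕ) : Finset (Fin k × Fin k) := univ.filter fun p => p.1 < p.2

@[simp]
theorem mem_pairsLT {k : ℕ} {p : Fin k × Fin k} : p ∈ pairsLT k ↔ p.1 < p.2 := by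
  simp [pairsLT]

section Vandermonde

variable {A : Type*} [CommRing A] {k : ℕ}

theorem det_vandermonde_eq_prod_pairsLT (g : Fin k → A) :
    (vandermonde g).det = ∏ p ∈ pairsLT k, (g p.2 - g p.1) := by
  rw [det_vandermonde, prod_sigma']
  exact prod_nbij' (fun p => (p.1, p.2)) (fun p => ⟨p.1, p.2⟩) (by simp) (by simp) (by simp)
    (by simp) (by simp)

theorem det_vandermonde_comp_perm (g : Fin k → A) (σ : Perm (Fin k)) :
    (vandermonde (g ∘ σ)).det = Perm.sign σ * (vandermonde g).det := by
  rw [← det_permute]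
  rfl

theorem map_det_vandermonde {B F : Type*} [CommRing B] [FunLike F A B] [RingHomClass F A B]
    (f : F) (g : Fin k → A) : f (vandermonde g).det = (vandermonde (f ∘ g)).det := by
  simp [det_vandermonde_eq_prod_pairsLT, map_prod]

end Vandermonde

section ShuffleNumerator

variable {A B : Type*} [CommRing A] [CommRing B] {k : ℕ}

def wheelFactor (q1 q2 x y : A) : A := (q1 * q2 * y - x) * (y - q1 * x) * (y - q2 * x)

theorem omegaF_eq_wheelFactor_div {K : Type*} [Field K] (q1 q2 x y : K) :
    omegaF q1 q2 x y = wheelFactor q1 q2 x y / (y - x) := by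
  rw [omegaF, wheelFactor, ← neg_sub y x, div_neg, neg_div']
  ring

def shuffleNumer (q1 q2 : A) (n : Fin k → ℕ) (g : Fin k → A) : A :=
  (∏ i, g i ^ n i) * ∏ p ∈ pairsLT k, wheelFactor q1 q2 (g p.1) (g p.2)

def shuffleAlt (q1 q2 : A) (n : Fin k → ℕ) (g : Fin k → A) : A :=
  ∑ σ : Perm (Fin k), (Perm.sign σ : A) * shuffleNumer q1 q2 n (g ∘ σ)

theorem map_shuffleAlt {F : Type*} [FunLike F A B] [RingHomClass F A B] (f : F) (q1 q2 : A)
    (n : Fin k → ℕ) (g : Fin k → A) :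
    f (shuffleAlt q1 q2 n g) = shuffleAlt (f q1) (f q2) n (f ∘ g) := by
  simp [shuffleAlt, shuffleNumer, wheelFactor, map_prod]

theorem shuffleAlt_eq_zero_of_eq [NoZeroDivisors A] [CharZero A] (q1 q2 : A) (n : Fin k → ℕ)
    {g : Fin k → A} {i j : Fin k} (hij : i ≠ j) (hg : g i = g j) :
    shuffleAlt q1 q2 n g = 0 := by
  have hswap : g ∘ swap i j = g := by
    funext c
    rcases eq_or_ne c i with rfl | hci
    · simp [hg]
    rcases eq_or_ne c j with rfl | hcj
    · simp [hg]
    · simp [swap_apply_of_ne_of_ne hci hcj]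
  rw [← CharZero.eq_neg_self_iff]
  calc shuffleAlt q1 q2 n g
      = ∑ σ : Perm (Fin k), (Perm.sign (swap i j * σ) : A) *
          shuffleNumer q1 q2 n (g ∘ ⇑(swap i j * σ)) :=
        (Fintype.sum_equiv (Equiv.mulLeft (swap i j)) _ _ fun _ => rfl).symm
    _ = -shuffleAlt q1 q2 n g := by
        rw [shuffleAlt, ← sum_neg_distrib]
        refine sum_congr rfl fun σ _ => ?_
        rw [Perm.coe_mul, ← Function.comp_assoc, hswap, Perm.sign_mul, Perm.sign_swap hij]
        push_cast
        ring

theorem shuffleNumer_eq_zero_of_wheel (q1 q2 : A) (n : Fin k → ℕ) {g : Fin k → A}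
    {a b c : Fin k} (hab : a ≠ b) (hbc : b ≠ c) (h1 : g b = q1 * g a) (h2 : g c = q2 * g b) :
    shuffleNumer q1 q2 n g = 0 := by
  -- One of the pairs `(a, b)`, `(b, c)`, `(c, a)` is increasing; `wheelFactor` vanishes on each.
  suffices ∃ p ∈ pairsLT k, wheelFactor q1 q2 (g p.1) (g p.2) = 0 by
    obtain ⟨p, hp, hz⟩ := this
    rw [shuffleNumer, prod_eq_zero hp hz, mul_zero]
  rcases hab.lt_or_gt with hab | hba
  · exact ⟨(a, b), mem_pairsLT.2 hab, by simp [wheelFactor, h1]⟩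
  rcases hbc.lt_or_gt with hbc | hcb
  · exact ⟨(b, c), mem_pairsLT.2 hbc, by simp [wheelFactor, h2]⟩
  · exact ⟨(c, a), mem_pairsLT.2 (hcb.trans hba), by simp [wheelFactor, h2, h1]; ring⟩

theorem shuffleAlt_eq_zero_of_wheel (q1 q2 : A) (n : Fin k → ℕ) {g : Fin k → A}
    {a b c : Fin k} (hab : a ≠ b) (hbc : b ≠ c) (h1 : g b = q1 * g a) (h2 : g c = q2 * g b) :
    shuffleAlt q1 q2 n g = 0 :=
  sum_eq_zero fun σ _ => by
    rw [shuffleNumer_eq_zero_of_wheel q1 q2 n (a := σ.symm a) (b := σ.symm b) (c := σ.symm c)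
      (by simpa using hab) (by simpa using hbc) (by simpa using h1) (by simpa using h2), mul_zero]

end ShuffleNumerator

namespace MvPolynomial

variable {R σ : Type*} [CommRing R]

theorem sub_aeval_mem_span_X_sub (f : σ → MvPolynomial σ R) (p : MvPolynomial σ R) :
    p - aeval f p ∈ Ideal.span (Set.range fun s => X s - f s) := by
  induction p using MvPolynomial.induction_on with
  | C a => simp
  | add p q hp hq =>
    rw [map_add, add_sub_add_comm]
    exact add_mem hp hq
  | mul_X p s hp =>
    have h : p * X s - aeval f (p * X s) = (p - aeval f p) * X s + aeval f p * (X s - f s) := by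
      rw [map_mul, aeval_X]
      ring
    rw [h]
    exact add_mem (Ideal.mul_mem_right _ _ hp) (Ideal.mul_mem_left _ _ (Ideal.subset_span ⟨s, rfl⟩))

variable [DecidableEq σ]

theorem X_sub_X_dvd_iff {i j : σ} (hij : i ≠ j) {p : MvPolynomial σ R} :
    X i - X j ∣ p ↔ rename (Function.update id i j) p = 0 := by
  constructor
  · rintro ⟨c, rfl⟩
    simp [Function.update_of_ne hij.symm]
  · intro hp
    have hmem := sub_aeval_mem_span_X_sub (X ∘ Function.update id i j) p
    rw [← rename_eq_aeval, hp, sub_zero] at hmem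
    rw [← Ideal.mem_span_singleton]
    refine Ideal.span_le.2 ?_ hmem
    rintro _ ⟨s, rfl⟩
    rcases eq_or_ne s i with rfl | hs
    · simp
    · simp [Function.update_of_ne hs]

theorem prime_X_sub_X [IsDomain R] {i j : σ} (hij : i ≠ j) :
    Prime (X i - X j : MvPolynomial σ R) := by
  have hker : Ideal.span {X i - X j} = RingHom.ker (rename (R := R) (Function.update id i j)) := by
    ext p
    rw [Ideal.mem_span_singleton, X_sub_X_dvd_iff hij]
    rfl
  rw [← Ideal.span_singleton_prime (sub_ne_zero.2 ((X_injective (R := R)).ne hij)), hker]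
  exact RingHom.ker_isPrime _

end MvPolynomial

section VandermondeDivisibility

open MvPolynomial

variable {R : Type*} [CommRing R] [IsDomain R] {k : ℕ}

theorem det_vandermonde_X_dvd {p : MvPolynomial (Fin k) R}
    (hp : ∀ i j : Fin k, i < j → rename (Function.update id j i) p = 0) :
    (vandermonde (X : Fin k → MvPolynomial (Fin k) R)).det ∣ p := by
  rw [det_vandermonde_eq_prod_pairsLT]
  refine prod_dvd_of_prime_of_pairwise_not_dvd
    (fun ij hij => prime_X_sub_X (mem_pairsLT.1 hij).ne') ?_
    fun ij hij => (X_sub_X_dvd_iff (mem_pairsLT.1 hij).ne').2 (hp _ _ (mem_pairsLT.1 hij))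
  rintro ⟨i, j⟩ hij ⟨a, b⟩ hab hne
  simp only [mem_coe, mem_pairsLT] at hij hab
  rw [X_sub_X_dvd_iff hij.ne']
  -- `update id j i` identifies `a` and `b` only when `(a, b) = (i, j)`.
  simp only [map_sub, rename_X, sub_eq_zero, (X_injective (R := R)).eq_iff, Function.update_apply,
    id_eq]
  grind

theorem det_vandermonde_X_dvd_shuffleAlt [CharZero R] (q1 q2 : R) (n : Fin k → ℕ) :
    (vandermonde (X : Fin k → MvPolynomial (Fin k) R)).det ∣ shuffleAlt (C q1) (C q2) n X :=
  det_vandermonde_X_dvd fun i j hij => by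
    rw [map_shuffleAlt, rename_C, rename_C]
    exact shuffleAlt_eq_zero_of_eq _ _ n hij.ne (by simp [Function.update_of_ne hij.ne])

end VandermondeDivisibility

section Wheel

open MvPolynomial

variable {R : Type*} [CommRing R] {m : ℕ}

def wheelPoint (q1 q2 : R) : Fin (m + 3) → MvPolynomial (Fin (m + 3)) R :=
  Function.update (Function.update X 1 (C q1 * X 0)) 2 (C q1 * C q2 * X 0)

theorem wheelPoint_zero (q1 q2 : R) : wheelPoint (m := m) q1 q2 0 = X 0 := by
  simp [wheelPoint, Fin.ext_iff, Nat.mod_eq_of_lt]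

theorem wheelPoint_one (q1 q2 : R) : wheelPoint (m := m) q1 q2 1 = C q1 * X 0 := by
  simp [wheelPoint, Fin.ext_iff, Nat.mod_eq_of_lt]

theorem wheelPoint_two (q1 q2 : R) : wheelPoint (m := m) q1 q2 2 = C q1 * C q2 * X 0 := by
  simp [wheelPoint]

theorem aeval_wheelPoint_shuffleAlt (q1 q2 : R) (n : Fin (m + 3) → ℕ) :
    aeval (wheelPoint q1 q2) (shuffleAlt (C q1) (C q2) n X) = 0 := by
  rw [map_shuffleAlt, aeval_C, aeval_C]
  refine shuffleAlt_eq_zero_of_wheel (a := 0) (b := 1) (c := 2) _ _ n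
    (by simp) (by simp [Fin.ext_iff, Nat.mod_eq_of_lt]) ?_ ?_
  · simp [wheelPoint_zero, wheelPoint_one]
  · simp [wheelPoint_one, wheelPoint_two]
    ring

theorem mem_span_wheel_of_shuffleAlt_eq_mul [IsDomain R] {q1 q2 : R}
    (hinj : Function.Injective (wheelPoint (m := m) q1 q2)) {n : Fin (m + 3) → ℕ}
    {B : MvPolynomial (Fin (m + 3)) R}
    (hB : shuffleAlt (C q1) (C q2) n X = (vandermonde X).det * B) :
    B ∈ Ideal.span {C q1 * X 0 - X 1, C q2 * X 1 - X 2} := by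
  have hB0 : aeval (wheelPoint q1 q2) B = 0 := by
    have h := aeval_wheelPoint_shuffleAlt q1 q2 n
    rw [hB, map_mul, map_det_vandermonde,
      show ⇑(aeval (wheelPoint q1 q2)) ∘ X = wheelPoint q1 q2 from funext (aeval_X _)] at h
    exact (mul_eq_zero.1 h).resolve_left (det_vandermonde_ne_zero_iff.2 hinj)
  have hmem := sub_aeval_mem_span_X_sub (wheelPoint q1 q2) B
  rw [hB0, sub_zero] at hmem
  refine Ideal.span_le.2 ?_ hmem
  rintro _ ⟨s, rfl⟩
  rw [SetLike.mem_coe, Ideal.mem_span_pair]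
  by_cases h2 : s = 2
  · subst h2
    exact ⟨-C q2, -1, by simp only [wheelPoint_two]; ring⟩
  by_cases h1 : s = 1
  · subst h1
    exact ⟨-1, 0, by simp only [wheelPoint_one]; ring⟩
  · exact ⟨0, 0, by simp [wheelPoint, h1, h2]⟩

theorem wheelPoint_X_injective {K : Type*} [CommRing K] [CharZero K] :
    Function.Injective (wheelPoint (m := m) (X 0 : MvPolynomial (Fin 2) K) (X 1)) := by
  -- At `q1 = q2 = 2` and `zᵢ = 2 ^ i` the wheel point becomes `i ↦ 2 ^ i`.
  let ev := eval₂Hom (eval (σ := Fin 2) fun _ => (2 : K)) fun i : Fin (m + 3) => (2 : K) ^ (i : ℕ)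
  have hev : ∀ a, ev (wheelPoint (X 0) (X 1) a) = ((2 ^ (a : ℕ) : ℕ) : K) := by
    intro a
    by_cases h2 : a = 2
    · subst h2; simp [ev, wheelPoint_two, Nat.mod_eq_of_lt]; norm_num
    by_cases h1 : a = 1
    · subst h1; simp [ev, wheelPoint_one]
    · simp [ev, wheelPoint, h1, h2]
  intro a b hab
  have := congrArg ev hab
  rw [hev, hev, Nat.cast_inj] at this
  exact Fin.ext (Nat.pow_right_injective le_rfl this)

end Wheel

section FieldSide

variable {K : Type*} [Field K] {k : ℕ}

theorem sh_add_const (q1 q2 : K) {z : Fin k → K} (hz : ∀ i, z i ≠ 0) (d : Fin k → ℤ) (M : ℕ) :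
    Sh q1 q2 z (fun i => d i + M) = (∏ i, z i) ^ M * Sh q1 q2 z d := by
  rw [Sh, Sh, mul_sum]
  refine sum_congr rfl fun σ _ => ?_
  have : ∏ i, z (σ i) ^ (d i + M) = (∏ i, z i) ^ M * ∏ i, z (σ i) ^ d i := by
    simp_rw [zpow_add₀ (hz _), prod_mul_distrib, zpow_natCast, prod_pow, Equiv.prod_comp σ z]
    ring
  rw [this, mul_assoc]

theorem sh_natCast_mul_det_vandermonde (q1 q2 : K) {z : Fin k → K} (hz : Function.Injective z)
    (n : Fin k → ℕ) : Sh q1 q2 z (fun i => n i) * (vandermonde z).det = shuffleAlt q1 q2 n z := by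
  have hD : (vandermonde z).det ≠ 0 := det_vandermonde_ne_zero_iff.2 hz
  rw [Sh, sum_mul]
  refine sum_congr rfl fun σ _ => ?_
  have hω : ∏ p ∈ univ.filter (fun p : Fin k × Fin k => p.1 < p.2),
        omegaF q1 q2 (z (σ p.1)) (z (σ p.2)) =
      (∏ p ∈ pairsLT k, wheelFactor q1 q2 (z (σ p.1)) (z (σ p.2))) /
        (Perm.sign σ * (vandermonde z).det) := by
    rw [← det_vandermonde_comp_perm, det_vandermonde_eq_prod_pairsLT, ← prod_div_distrib]
    exact prod_congr rfl fun p _ => omegaF_eq_wheelFactor_div ..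
  have hsign : (Perm.sign σ : K) * Perm.sign σ = 1 := by
    rw [← Int.cast_mul, ← Units.val_mul, Int.units_mul_self]; simp
  rw [hω, shuffleNumer]
  simp only [zpow_natCast, Function.comp_apply]
  field_simp
  rw [div_eq_mul_inv, inv_eq_of_mul_eq_one_right hsign]

end FieldSide

section Specialization

open MvPolynomial

variable {k : ℕ}

/-- Treating `q1, q2` as constants makes the substitutions in the `zᵢ` above algebra maps. -/
def toFk (k : ℕ) : MvPolynomial (Fin k) (MvPolynomial (Fin 2) ℂ) →+* Fk k :=
  (algebraMap (MvPolynomial (Fin 2 ⊕ Fin k) ℂ) (Fk k)).comp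
    (eval₂Hom (rename Sum.inl).toRingHom fun i => X (Sum.inr i))

theorem toFk_C_X_zero : toFk k (C (X 0)) = q1F k := by simp [toFk, q1F]

theorem toFk_C_X_one : toFk k (C (X 1)) = q2F k := by simp [toFk, q2F]

theorem toFk_X (i : Fin k) : toFk k (X i) = zF k i := by simp [toFk, zF]

theorem toFk_comp_X : ⇑(toFk k) ∘ X = zF k := funext toFk_X

theorem zF_injective : Function.Injective (zF k) :=
  (IsFractionRing.injective _ _).comp (X_injective.comp Sum.inr_injective)

theorem zF_ne_zero (i : Fin k) : zF k i ≠ 0 :=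
  (map_ne_zero_iff _ (IsFractionRing.injective _ _)).2 (X_ne_zero _)

theorem toFk_mem_laurentSubring (p : MvPolynomial (Fin k) (MvPolynomial (Fin 2) ℂ)) :
    toFk k p ∈ laurentSubring (q1F k) (q2F k) (zF k) := by
  suffices ∀ p : MvPolynomial (Fin 2 ⊕ Fin k) ℂ,
      algebraMap _ (Fk k) p ∈ laurentSubring (q1F k) (q2F k) (zF k) from this _
  intro p
  induction p using MvPolynomial.induction_on with
  | C c =>
    exact Subring.subset_closure
      (Or.inl (Or.inl (Or.inl ⟨c, (IsScalarTower.algebraMap_apply _ _ _ c).symm⟩)))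
  | add p q hp hq => rw [map_add]; exact add_mem hp hq
  | mul_X p s hp =>
    rw [map_mul]
    refine mul_mem hp (Subring.subset_closure ?_)
    rcases s with t | i
    · fin_cases t
      · exact Or.inl (Or.inl (Or.inr (by simp [q1F])))
      · exact Or.inl (Or.inl (Or.inr (by simp [q2F])))
    · exact Or.inl (Or.inr ⟨i, rfl⟩)

theorem inv_prod_zF_pow_mem_laurentSubring (M : ℕ) :
    ((∏ i, zF k i) ^ M)⁻¹ ∈ laurentSubring (q1F k) (q2F k) (zF k) := by
  rw [← inv_pow, ← prod_inv_distrib]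
  refine pow_mem (_root_.prod_mem fun i _ => ?_) M
  exact Subring.subset_closure (Or.inr ⟨i, rfl⟩)

theorem sh_zF_eq_inv_prod_zF_pow_mul_toFk {d : Fin k → ℤ} {M : ℕ} {n : Fin k → ℕ}
    (hn : ∀ i, (n i : ℤ) = d i + M) {B : MvPolynomial (Fin k) (MvPolynomial (Fin 2) ℂ)}
    (hB : shuffleAlt (C (X 0 : MvPolynomial (Fin 2) ℂ)) (C (X 1)) n X = (vandermonde X).det * B) :
    Sh (q1F k) (q2F k) (zF k) d = ((∏ i, zF k i) ^ M)⁻¹ * toFk k B := by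
  rw [eq_inv_mul_iff_mul_eq₀ (pow_ne_zero _ (prod_ne_zero_iff.2 fun i _ => zF_ne_zero i))]
  have h := sh_natCast_mul_det_vandermonde (q1F k) (q2F k) zF_injective n
  rw [funext hn, sh_add_const _ _ zF_ne_zero] at h
  have hB' := congrArg (toFk k) hB
  rw [map_shuffleAlt, map_mul, map_det_vandermonde, toFk_C_X_zero, toFk_C_X_one,
    toFk_comp_X] at hB'
  refine mul_right_cancel₀ (det_vandermonde_ne_zero_iff.2 zF_injective) ?_
  rw [h, hB', mul_comm]

end Specialization

/-- Ideal form of the wheel conditions, first ideal: for every `k ≥ 3` (written `k = m + 3`)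
and `d ∈ ℤ^k`, there are Laurent polynomials `a, b ∈ R[z1^{±1}, …, zk^{±1}]` with
`Sh_k(d) = a·(q1·z1 − z2) + b·(q2·z2 − z3)`. -/
theorem sh_mem_wheel_ideal_one (m : ℕ) (d : Fin (m + 3) → ℤ) :
    ∃ a b : Fk (m + 3),
      a ∈ laurentSubring (q1F (m + 3)) (q2F (m + 3)) (zF (m + 3)) ∧
      b ∈ laurentSubring (q1F (m + 3)) (q2F (m + 3)) (zF (m + 3)) ∧
      Sh (q1F (m + 3)) (q2F (m + 3)) (zF (m + 3)) d =
        a * (q1F (m + 3) * zF (m + 3) 0 - zF (m + 3) 1)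
          + b * (q2F (m + 3) * zF (m + 3) 1 - zF (m + 3) 2) := by
  obtain ⟨M, n, hn⟩ := exists_natCast_eq_add_const d
  obtain ⟨B, hB⟩ := det_vandermonde_X_dvd_shuffleAlt (X 0 : MvPolynomial (Fin 2) ℂ) (X 1) n
  obtain ⟨a, b, rfl⟩ :=
    Ideal.mem_span_pair.1 (mem_span_wheel_of_shuffleAlt_eq_mul wheelPoint_X_injective hB)
  have hZ := inv_prod_zF_pow_mem_laurentSubring (k := m + 3) M
  refine ⟨_, _, mul_mem hZ (toFk_mem_laurentSubring a), mul_mem hZ (toFk_mem_laurentSubring b), ?_⟩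
  rw [sh_zF_eq_inv_prod_zF_pow_mul_toFk hn hB]
  simp only [map_add, map_mul, map_sub, toFk_C_X_zero, toFk_C_X_one, toFk_X]
  ring

end
end

section
/- (Evaluation at z2 = −z1.) For every k ≥ 2 and every d = (d1, …, dk) ∈ ℤ^k, there exists a Laurent polynomial c ∈ R[z1^{±1}, z3^{±1}, …, zk^{±1}] such that substituting z2 = −z1 into the monomial shuffle element Sh_k(d) yields Sh_k(d)(z1, −z1, z3, …, zk) = (1 + q1)(1 + q2)(1 + q)·c in the field ℂ(q1, q2, z1, z3, …, zk). -/
open MvPolynomial Finset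

noncomputable section

/-!
Clearing denominators, `Sh_k(d)` times `(z₁⋯z_k)^M ∏_{i<j} (z_i - z_j)` is the alternating sum
`shNumerator` of the polynomials `z^e ∏_{i<j} ν(z_i, z_j)`, where `e = d + M ≥ 0` and
`ν(x, y) = (x - q y)(y - q₁ x)(y - q₂ x)` is the numerator of `ω`. Specialise `z₂ = -z₁` in the
polynomial ring. Every term of the sum then contains the factor
`ν(±z₁, ∓z₁) = ±z₁³ (1 + q₁)(1 + q₂)(1 + q)`. Every other Vandermonde factor `w_i - w_j` divides the
sum too: substituting `w_i` for the variable `w_j` makes two arguments of the alternating sum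
equal, and it kills no other factor `w_k - w_l`, so their product divides in the domain. What is
left, `w₁ - w₂ = 2 z₁` and the monomial `(z₁⋯z_k)^M`, is a unit of the Laurent ring, and the
quotient does not involve `z₂` because it is fixed by `z₂ ↦ 0`.
-/

open Equiv

abbrev ltPairs (k : ℕ) : Finset (Fin k × Fin k) := univ.filter fun p => p.1 < p.2

theorem Equiv.Perm.sum_sign_smul_eq_zero_of_swap {α M : Type*} [Fintype α] [DecidableEq α]
    [AddCommGroup M] {a b : α} (hab : a ≠ b) (f : Perm α → M)
    (hf : ∀ σ, f (swap a b * σ) = f σ) : ∑ σ : Perm α, Perm.sign σ • f σ = 0 :=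
  Finset.sum_ninvolution (swap a b * ·)
    (fun σ => by simp [hf, Perm.sign_mul, Perm.sign_swap hab])
    (fun σ _ => by simpa [swap_eq_one_iff] using hab)
    (fun _ => Finset.mem_univ _) (swap_mul_self_mul a b)

theorem Fin.prod_ltPairs_eq_prod_Ioi {M : Type*} [CommMonoid M] {k : ℕ}
    (f : Fin k × Fin k → M) :
    ∏ p ∈ ltPairs k, f p = ∏ i, ∏ j ∈ Ioi i, f (i, j) := by
  simp only [Finset.prod_filter, Fintype.prod_prod_type, ← Finset.filter_lt_eq_Ioi]

theorem prod_ltPairs_sub_eq_det_vandermonde {R : Type*} [CommRing R] {k : ℕ} (z : Fin k → R) :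
    ∏ p ∈ ltPairs k, (z p.1 - z p.2) =
      (-1) ^ #(ltPairs k) * (Matrix.vandermonde z).det := by
  rw [Matrix.det_vandermonde, ← Fin.prod_ltPairs_eq_prod_Ioi (fun p => z p.2 - z p.1),
    ← Finset.prod_const, ← Finset.prod_mul_distrib]
  exact Finset.prod_congr rfl fun _ _ => by ring

theorem prod_ltPairs_sub_comp_perm {R : Type*} [CommRing R] {k : ℕ} (z : Fin k → R)
    (σ : Perm (Fin k)) :
    ∏ p ∈ ltPairs k, (z (σ p.1) - z (σ p.2)) =
      Perm.sign σ • ∏ p ∈ ltPairs k, (z p.1 - z p.2) := by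
  have hvdm : Matrix.vandermonde (z ∘ σ) = (Matrix.vandermonde z).submatrix σ id := rfl
  refine (prod_ltPairs_sub_eq_det_vandermonde (z ∘ σ)).trans ?_
  rw [prod_ltPairs_sub_eq_det_vandermonde z, hvdm, Matrix.det_permute, Units.smul_def, zsmul_eq_mul]
  ring

theorem exists_eq_natCast_sub_natCast {ι : Type*} [Fintype ι] (d : ι → ℤ) :
    ∃ (e : ι → ℕ) (M : ℕ), ∀ i, d i = e i - M := by
  refine ⟨fun i => (d i + ∑ j, (d j).natAbs).toNat, ∑ j, (d j).natAbs, fun i => ?_⟩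
  have hle : (d i).natAbs ≤ ∑ j, (d j).natAbs :=
    single_le_sum (f := fun j => (d j).natAbs) (fun _ _ => Nat.zero_le _) (mem_univ i)
  have hneg : -d i ≤ (d i).natAbs := by rw [Int.natCast_natAbs]; exact neg_le_abs (d i)
  rw [Int.toNat_of_nonneg (by omega)]
  ring

section ShNumerator

variable {R : Type*} [CommRing R] {k : ℕ}

def omegaNum (q1 q2 x y : R) : R := (x - q1 * q2 * y) * (y - q1 * x) * (y - q2 * x)

def shNumerator (q1 q2 : R) (z : Fin k → R) (e : Fin k → ℕ) : R :=
  ∑ σ : Perm (Fin k), Perm.sign σ •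
    ((∏ i, z (σ i) ^ e i) * ∏ p ∈ ltPairs k, omegaNum q1 q2 (z (σ p.1)) (z (σ p.2)))

theorem map_shNumerator {S F : Type*} [CommRing S] [FunLike F R S] [RingHomClass F R S]
    (φ : F) (q1 q2 : R) (z : Fin k → R) (e : Fin k → ℕ) :
    φ (shNumerator q1 q2 z e) = shNumerator (φ q1) (φ q2) (φ ∘ z) e := by
  simp [shNumerator, omegaNum]

theorem shNumerator_eq_zero_of_eq (q1 q2 : R) {z : Fin k → R} (e : Fin k → ℕ) {a b : Fin k}
    (hab : a ≠ b) (h : z a = z b) : shNumerator q1 q2 z e = 0 := by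
  have hswap : ∀ i, z (swap a b i) = z i := fun i => by
    rw [swap_apply_def]; split_ifs <;> simp_all
  exact Perm.sum_sign_smul_eq_zero_of_swap hab _ fun σ => by simp only [Perm.mul_apply, hswap]

theorem omegaNum_neg_right (q1 q2 x : R) :
    omegaNum q1 q2 x (-x) = x ^ 3 * ((1 + q1) * (1 + q2) * (1 + q1 * q2)) := by
  unfold omegaNum; ring

theorem omegaNum_neg_left (q1 q2 x : R) :
    omegaNum q1 q2 (-x) x = -x ^ 3 * ((1 + q1) * (1 + q2) * (1 + q1 * q2)) := by
  unfold omegaNum; ring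

theorem dvd_prod_omegaNum_of_eq_neg (q1 q2 : R) {z : Fin k → R} {a b : Fin k} (hab : a ≠ b)
    (h : z b = -z a) :
    (1 + q1) * (1 + q2) * (1 + q1 * q2) ∣ ∏ p ∈ ltPairs k, omegaNum q1 q2 (z p.1) (z p.2) := by
  rcases hab.lt_or_gt with hlt | hlt
  · refine (Dvd.intro_left (z a ^ 3) ?_).trans
      (dvd_prod_of_mem _ (by simpa using hlt : (a, b) ∈ ltPairs k))
    rw [h, omegaNum_neg_right]
  · refine (Dvd.intro_left (-z a ^ 3) ?_).trans
      (dvd_prod_of_mem _ (by simpa using hlt : (b, a) ∈ ltPairs k))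
    rw [h, omegaNum_neg_left]

theorem dvd_shNumerator_of_eq_neg (q1 q2 : R) {z : Fin k → R} (e : Fin k → ℕ) {a b : Fin k}
    (hab : a ≠ b) (h : z b = -z a) :
    (1 + q1) * (1 + q2) * (1 + q1 * q2) ∣ shNumerator q1 q2 z e := by
  refine dvd_sum fun σ _ => ?_
  rw [Units.smul_def, zsmul_eq_mul]
  refine dvd_mul_of_dvd_right (dvd_mul_of_dvd_right ?_ _) _
  exact dvd_prod_omegaNum_of_eq_neg q1 q2 (z := z ∘ σ) (σ.symm.injective.ne hab)
    (by simpa using h)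

end ShNumerator

section Field

variable {K : Type*} [Field K] {k : ℕ}

theorem prod_zpow_mul_prod_pow {z : Fin k → K} (hz : ∀ i, z i ≠ 0) {d : Fin k → ℤ}
    {e : Fin k → ℕ} {M : ℕ} (hde : ∀ i, d i = e i - M) :
    (∏ i, z i ^ d i) * (∏ i, z i) ^ M = ∏ i, z i ^ e i := by
  rw [← prod_pow, ← prod_mul_distrib]
  refine prod_congr rfl fun i _ => ?_
  rw [hde, zpow_sub₀ (hz i), zpow_natCast, zpow_natCast, div_mul_cancel₀ _ (pow_ne_zero _ (hz i))]

theorem prod_omegaF_mul_prod_sub (q1 q2 : K) {z : Fin k → K} (hz : Function.Injective z) :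
    (∏ p ∈ ltPairs k, omegaF q1 q2 (z p.1) (z p.2)) * ∏ p ∈ ltPairs k, (z p.1 - z p.2) =
      ∏ p ∈ ltPairs k, omegaNum q1 q2 (z p.1) (z p.2) := by
  rw [← prod_mul_distrib]
  refine prod_congr rfl fun p hp => ?_
  have hne : z p.1 - z p.2 ≠ 0 := sub_ne_zero.mpr (hz.ne (mem_filter.mp hp).2.ne)
  rw [omegaF, div_mul_cancel₀ _ hne, omegaNum]

theorem Sh_mul_eq_shNumerator (q1 q2 : K) {z : Fin k → K} (hz : Function.Injective z)
    (hz0 : ∀ i, z i ≠ 0) {d : Fin k → ℤ} {e : Fin k → ℕ} {M : ℕ} (hde : ∀ i, d i = e i - M) :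
    Sh q1 q2 z d * ((∏ i, z i) ^ M * ∏ p ∈ ltPairs k, (z p.1 - z p.2)) =
      shNumerator q1 q2 z e := by
  rw [Sh, sum_mul]
  refine sum_congr rfl fun σ _ => ?_
  have hV : ∏ p ∈ ltPairs k, (z p.1 - z p.2) =
      Perm.sign σ • ∏ p ∈ ltPairs k, (z (σ p.1) - z (σ p.2)) := by
    rw [prod_ltPairs_sub_comp_perm, smul_smul, Int.units_mul_self, one_smul]
  have hpow := prod_zpow_mul_prod_pow (z := z ∘ σ) (fun i => hz0 _) hde
  have hnum := prod_omegaF_mul_prod_sub q1 q2 (hz.comp σ.injective)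
  simp only [Function.comp_apply] at hpow hnum
  rw [hV, ← Equiv.prod_comp σ z, ← hpow, ← hnum, Units.smul_def, Units.smul_def, zsmul_eq_mul,
    zsmul_eq_mul]
  ring

end Field

section Divisibility

open Function

theorem MvPolynomial.X_sub_dvd_sub_aeval_update {R σ : Type*} [CommRing R] [DecidableEq σ]
    (s : σ) (t p : MvPolynomial σ R) : X s - t ∣ p - aeval (update X s t) p := by
  induction p using MvPolynomial.induction_on with
  | C a => simp
  | add p q hp hq => simpa [add_sub_add_comm] using dvd_add hp hq
  | mul_X p v hp =>
    have hsplit : p * X v - aeval (update X s t) (p * X v) =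
        (p - aeval (update X s t) p) * X v + aeval (update X s t) p * (X v - update X s t v) := by
      rw [map_mul, aeval_X]; ring
    rw [hsplit]
    refine dvd_add (hp.mul_right _) (dvd_mul_of_dvd_right ?_ _)
    rcases eq_or_ne v s with rfl | hv
    · simp
    · simp [hv]

theorem MvPolynomial.X_sub_dvd_of_aeval_update_eq_zero {R σ : Type*} [CommRing R] [DecidableEq σ]
    {s : σ} {t p : MvPolynomial σ R} (h : aeval (update X s t) p = 0) : X s - t ∣ p := by
  have hdvd := X_sub_dvd_sub_aeval_update s t p
  rwa [h, sub_zero] at hdvd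

theorem Finset.prod_dvd_of_forall_map_eq_zero {ι A B F : Type*} [CommRing A] [CommRing B]
    [NoZeroDivisors B] [FunLike F A B] [RingHomClass F A B] {s : Finset ι} {L : ι → A}
    {φ : ι → F} (hdvd : ∀ i ∈ s, ∀ x, φ i x = 0 → L i ∣ x)
    (hL : ∀ i ∈ s, ∀ j ∈ s, i ≠ j → φ j (L i) ≠ 0) {x : A} (hx : ∀ i ∈ s, φ i x = 0) :
    ∏ i ∈ s, L i ∣ x := by
  classical
  induction s using Finset.induction_on generalizing x with
  | empty => simp
  | insert i s hi ih =>
    obtain ⟨y, rfl⟩ := hdvd i (mem_insert_self i s) x (hx i (mem_insert_self i s))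
    rw [prod_insert hi]
    refine mul_dvd_mul_left _ (ih (fun j hj => hdvd j (mem_insert_of_mem hj))
      (fun j hj l hl => hL j (mem_insert_of_mem hj) l (mem_insert_of_mem hl)) fun j hj => ?_)
    have hxj := hx j (mem_insert_of_mem hj)
    rw [map_mul] at hxj
    exact (mul_eq_zero.mp hxj).resolve_left
      (hL i (mem_insert_self i s) j (mem_insert_of_mem hj) (by rintro rfl; exact hi hj))

theorem MvPolynomial.apply_mem_of_forall_C_mem_of_forall_X_mem {R σ S : Type*} [CommSemiring R]
    [Ring S] (f : MvPolynomial σ R →+* S) {T : Subring S} (hC : ∀ c, f (C c) ∈ T)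
    (hX : ∀ v, f (X v) ∈ T) (p : MvPolynomial σ R) : f p ∈ T := by
  induction p using MvPolynomial.induction_on with
  | C a => exact hC a
  | add p q hp hq => rw [map_add]; exact T.add_mem hp hq
  | mul_X p v hp => rw [map_mul]; exact T.mul_mem hp (hX v)

theorem update_id_apply_ne_of_lt {α : Type*} [LinearOrder α] {p q : α × α} (hp : p.1 < p.2)
    (hq : q.1 < q.2) (hpq : p ≠ q) : update id q.2 q.1 p.1 ≠ update id q.2 q.1 p.2 := by
  simp only [update_apply, id]
  split_ifs with h1 h2 h2
  · exact absurd (h1.trans h2.symm) hp.ne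
  · exact fun h => (h ▸ hq).not_gt (h1 ▸ hp)
  · exact fun h => hpq (Prod.ext h h2)
  · exact hp.ne

end Divisibility

namespace ShEvalNegZ1

open Function

variable (m : ℕ)

abbrev Poly : Type := MvPolynomial (Fin 2 ⊕ Fin (m + 2)) ℂ

def w (i : Fin (m + 2)) : Poly m := if i = 1 then -X (Sum.inr 0) else X (Sum.inr i)

def collapse (p : Fin (m + 2) × Fin (m + 2)) : Poly m →ₐ[ℂ] Poly m :=
  aeval (update X (Sum.inr p.2) (w m p.1))

def dropZ2 : Poly m →ₐ[ℂ] Poly m := aeval (update X (Sum.inr 1) 0)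

def pairsNe01 : Finset (Fin (m + 2) × Fin (m + 2)) := (ltPairs (m + 2)).erase (0, 1)

def qFactor : Poly m :=
  (1 + X (Sum.inl 0)) * (1 + X (Sum.inl 1)) * (1 + X (Sum.inl 0) * X (Sum.inl 1))

/-- The Vandermonde factor of the pair `(0, 1)` is `2 z₁`, a unit of the Laurent ring, so it is
not divided out. -/
def vdmRest : Poly m := ∏ p ∈ pairsNe01 m, (w m p.1 - w m p.2)

def numer (e : Fin (m + 2) → ℕ) : Poly m := shNumerator (X (Sum.inl 0)) (X (Sum.inl 1)) (w m) e

variable {m}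

theorem w_injective : Injective (w m) := by
  have hX : ∀ i, (-X (Sum.inr 0) : Poly m) ≠ X (Sum.inr i) := fun i h => by
    have h1 := congrArg (MvPolynomial.eval fun _ => (1 : ℂ)) h
    norm_num at h1
  intro i j h
  unfold w at h
  split_ifs at h with hi hj hj
  · exact hi.trans hj.symm
  · exact absurd h (hX j)
  · exact absurd h.symm (hX i)
  · exact Sum.inr_injective (X_injective h)

theorem w_ne_zero (i : Fin (m + 2)) : w m i ≠ 0 := by
  unfold w; split_ifs <;> simp [X_ne_zero]

theorem w_one : w m 1 = -w m 0 := by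
  simp [w]

theorem mem_pairsNe01 {p : Fin (m + 2) × Fin (m + 2)} (hp : p ∈ pairsNe01 m) :
    p.1 < p.2 ∧ p.2 ≠ 0 ∧ p.2 ≠ 1 := by
  simp only [pairsNe01, mem_erase, mem_filter, mem_univ, true_and] at hp
  obtain ⟨hne, hlt⟩ := hp
  refine ⟨hlt, ((Fin.zero_le _).trans_lt hlt).ne', fun h1 => hne (Prod.ext ?_ h1)⟩
  rw [h1] at hlt
  exact Fin.ext (by simpa [Fin.lt_def] using hlt)

theorem collapse_w {p : Fin (m + 2) × Fin (m + 2)} (h0 : p.2 ≠ 0) (h1 : p.2 ≠ 1)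
    (i : Fin (m + 2)) : collapse m p (w m i) = w m (update id p.2 p.1 i) := by
  by_cases hi : i = p.2
  · subst hi; simp [collapse, w, h1]
  · by_cases hi1 : i = 1
    · subst hi1; simp [collapse, w, update_of_ne hi, Ne.symm h0]
    · simp [collapse, w, update_of_ne hi, hi1]

theorem collapse_qFactor (p : Fin (m + 2) × Fin (m + 2)) :
    collapse m p (qFactor m) = qFactor m := by
  simp [collapse, qFactor]

theorem qFactor_ne_zero : qFactor m ≠ 0 := fun h => by
  simpa [qFactor] using congrArg (MvPolynomial.eval fun _ => (0 : ℂ)) h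

theorem collapse_numer {p : Fin (m + 2) × Fin (m + 2)} (hp : p ∈ pairsNe01 m)
    (e : Fin (m + 2) → ℕ) : collapse m p (numer m e) = 0 := by
  obtain ⟨hlt, h0, h1⟩ := mem_pairsNe01 hp
  rw [numer, map_shNumerator]
  refine shNumerator_eq_zero_of_eq _ _ e hlt.ne ?_
  simp [collapse_w h0 h1, update_of_ne hlt.ne]

theorem dvd_of_collapse_eq_zero {p : Fin (m + 2) × Fin (m + 2)} (hp : p ∈ pairsNe01 m)
    {x : Poly m} (hx : collapse m p x = 0) : w m p.1 - w m p.2 ∣ x := by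
  obtain ⟨-, -, h1⟩ := mem_pairsNe01 hp
  rw [← neg_sub, neg_dvd, w, if_neg h1]
  exact X_sub_dvd_of_aeval_update_eq_zero hx

theorem collapse_sub_ne_zero {p q : Fin (m + 2) × Fin (m + 2)} (hp : p ∈ pairsNe01 m)
    (hq : q ∈ pairsNe01 m) (hpq : p ≠ q) : collapse m q (w m p.1 - w m p.2) ≠ 0 := by
  obtain ⟨hltp, -, -⟩ := mem_pairsNe01 hp
  obtain ⟨hltq, h0, h1⟩ := mem_pairsNe01 hq
  rw [map_sub, collapse_w h0 h1, collapse_w h0 h1, sub_ne_zero]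
  exact w_injective.ne (update_id_apply_ne_of_lt hltp hltq hpq)

theorem exists_numer_eq_mul (e : Fin (m + 2) → ℕ) :
    ∃ Q, numer m e = qFactor m * vdmRest m * Q := by
  obtain ⟨P', hP'⟩ : qFactor m ∣ numer m e := dvd_shNumerator_of_eq_neg _ _ e zero_ne_one w_one
  obtain ⟨Q, hQ⟩ : vdmRest m ∣ P' := by
    refine prod_dvd_of_forall_map_eq_zero (φ := collapse m)
      (fun p hp _ => dvd_of_collapse_eq_zero hp) (fun p hp q hq => collapse_sub_ne_zero hp hq)
      fun p hp => ?_
    have hPp := collapse_numer hp e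
    rw [hP', map_mul, collapse_qFactor] at hPp
    exact (mul_eq_zero.mp hPp).resolve_left qFactor_ne_zero
  exact ⟨Q, by rw [hP', hQ, mul_assoc]⟩

theorem vdmRest_ne_zero : vdmRest m ≠ 0 :=
  prod_ne_zero_iff.mpr fun _ hp => sub_ne_zero.mpr (w_injective.ne (mem_pairsNe01 hp).1.ne)

theorem dropZ2_w (i : Fin (m + 2)) : dropZ2 m (w m i) = w m i := by
  unfold w
  split_ifs with hi
  · simp [dropZ2]
  · simp [dropZ2, hi]

theorem exists_numer_eq_mul_dropZ2 (e : Fin (m + 2) → ℕ) :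
    ∃ Q, numer m e = qFactor m * vdmRest m * dropZ2 m Q := by
  obtain ⟨Q, hQ⟩ := exists_numer_eq_mul e
  have hP : dropZ2 m (numer m e) = numer m e := by
    rw [numer, map_shNumerator]
    congr 1
    · simp [dropZ2]
    · simp [dropZ2]
    · exact funext dropZ2_w
  have hU : dropZ2 m (qFactor m) = qFactor m := by simp [dropZ2, qFactor]
  have hV : dropZ2 m (vdmRest m) = vdmRest m := by simp [vdmRest, dropZ2_w]
  exact ⟨Q, by rw [← hP, hQ, map_mul, map_mul, hU, hV]⟩

variable (m) in
def laurentAwayZ2 : Subring (Fk (m + 2)) :=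
  Subring.closure
    ((Set.range fun cc : ℂ => algebraMap ℂ (Fk (m + 2)) cc) ∪
      {q1F (m + 2), (q1F (m + 2))⁻¹, q2F (m + 2), (q2F (m + 2))⁻¹} ∪
      (Set.range fun i : {i : Fin (m + 2) // i ≠ 1} => zF (m + 2) i.1) ∪
      (Set.range fun i : {i : Fin (m + 2) // i ≠ 1} => (zF (m + 2) i.1)⁻¹))

theorem algebraMap_dropZ2_mem (Q : Poly m) :
    algebraMap (Poly m) (Fk (m + 2)) (dropZ2 m Q) ∈ laurentAwayZ2 m := by
  refine apply_mem_of_forall_C_mem_of_forall_X_mem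
    ((algebraMap (Poly m) (Fk (m + 2))).comp (dropZ2 m).toRingHom) (fun c => ?_) (fun v => ?_) Q
  · refine Subring.subset_closure (Or.inl (Or.inl (Or.inl ⟨c, ?_⟩)))
    simp [IsScalarTower.algebraMap_apply ℂ (Poly m) (Fk (m + 2))]
  · rcases v with t | i
    · refine Subring.subset_closure (Or.inl (Or.inl (Or.inr ?_)))
      fin_cases t <;> simp [dropZ2, q1F, q2F]
    · by_cases hi : i = 1
      · simp [dropZ2, hi]
      · refine Subring.subset_closure (Or.inl (Or.inr ⟨⟨i, hi⟩, ?_⟩))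
        simp [dropZ2, hi, zF]

theorem zF_inv_mem {i : Fin (m + 2)} (hi : i ≠ 1) : (zF (m + 2) i)⁻¹ ∈ laurentAwayZ2 m :=
  Subring.subset_closure (Or.inr ⟨⟨i, hi⟩, rfl⟩)

theorem algebraMap_comp_w :
    algebraMap (Poly m) (Fk (m + 2)) ∘ w m =
      fun i => if i = 1 then -zF (m + 2) 0 else zF (m + 2) i := by
  funext i
  by_cases hi : i = 1 <;> simp [w, hi, zF]

theorem inv_algebraMap_w_mem (i : Fin (m + 2)) :
    (algebraMap (Poly m) (Fk (m + 2)) (w m i))⁻¹ ∈ laurentAwayZ2 m := by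
  have hw := congrFun (algebraMap_comp_w (m := m)) i
  simp only [comp_apply] at hw
  rw [hw]
  split_ifs with hi
  · have hinv : (-zF (m + 2) 0)⁻¹ = -(zF (m + 2) 0)⁻¹ := inv_neg
    rw [hinv]
    exact neg_mem (zF_inv_mem zero_ne_one)
  · exact zF_inv_mem hi

theorem prod_ltPairs_algebraMap_w_sub :
    ∏ p ∈ ltPairs (m + 2),
        (algebraMap (Poly m) (Fk (m + 2)) (w m p.1) - algebraMap (Poly m) (Fk (m + 2)) (w m p.2)) =
      2 * zF (m + 2) 0 * algebraMap (Poly m) (Fk (m + 2)) (vdmRest m) := by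
  have h01 : ((0, 1) : Fin (m + 2) × Fin (m + 2)) ∈ ltPairs (m + 2) := by simp
  rw [← mul_prod_erase _ _ h01, vdmRest, map_prod]
  simp only [map_sub, pairsNe01, w_one, map_neg]
  rw [w, if_neg zero_ne_one, zF]
  ring

theorem Sh_comp_w_eq {d : Fin (m + 2) → ℤ} {e : Fin (m + 2) → ℕ} {M : ℕ}
    (hde : ∀ i, d i = e i - M) {Q : Poly m} (hPQ : numer m e = qFactor m * vdmRest m * Q) :
    Sh (q1F (m + 2)) (q2F (m + 2)) (algebraMap (Poly m) (Fk (m + 2)) ∘ w m) d =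
      (1 + q1F (m + 2)) * (1 + q2F (m + 2)) * (1 + q1F (m + 2) * q2F (m + 2)) *
        (algebraMap (Poly m) (Fk (m + 2)) Q /
          ((∏ i, algebraMap (Poly m) (Fk (m + 2)) (w m i)) ^ M * (2 * zF (m + 2) 0))) := by
  have hι : Injective (algebraMap (Poly m) (Fk (m + 2))) := IsFractionRing.injective _ _
  have hw : ∀ i, algebraMap (Poly m) (Fk (m + 2)) (w m i) ≠ 0 :=
    fun i => (map_ne_zero_iff _ hι).mpr (w_ne_zero i)
  have hD : (∏ i, algebraMap (Poly m) (Fk (m + 2)) (w m i)) ^ M * (2 * zF (m + 2) 0) ≠ 0 :=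
    mul_ne_zero (pow_ne_zero _ (prod_ne_zero_iff.mpr fun i _ => hw i))
      (mul_ne_zero two_ne_zero ((map_ne_zero_iff _ hι).mpr (X_ne_zero _)))
  have hV : algebraMap (Poly m) (Fk (m + 2)) (vdmRest m) ≠ 0 :=
    (map_ne_zero_iff _ hι).mpr vdmRest_ne_zero
  have hU : algebraMap (Poly m) (Fk (m + 2)) (qFactor m) =
      (1 + q1F (m + 2)) * (1 + q2F (m + 2)) * (1 + q1F (m + 2) * q2F (m + 2)) := by
    simp [qFactor, q1F, q2F]
  have key := Sh_mul_eq_shNumerator (q1F (m + 2)) (q2F (m + 2)) (hι.comp w_injective) hw hde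
  have hnum : algebraMap (Poly m) (Fk (m + 2)) (numer m e) =
      shNumerator (q1F (m + 2)) (q2F (m + 2)) (algebraMap (Poly m) (Fk (m + 2)) ∘ w m) e :=
    map_shNumerator _ _ _ _ _
  rw [hPQ, map_mul, map_mul, hU] at hnum
  simp only [comp_apply, prod_ltPairs_algebraMap_w_sub] at key
  rw [← mul_div_assoc, eq_div_iff hD]
  refine mul_right_cancel₀ hV ?_
  linear_combination key - hnum

theorem algebraMap_dropZ2_div_mem (Q : Poly m) (M : ℕ) :
    algebraMap (Poly m) (Fk (m + 2)) (dropZ2 m Q) /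
        ((∏ i, algebraMap (Poly m) (Fk (m + 2)) (w m i)) ^ M * (2 * zF (m + 2) 0)) ∈
      laurentAwayZ2 m := by
  have h2 : (2 : Fk (m + 2))⁻¹ = algebraMap ℂ (Fk (m + 2)) 2⁻¹ := by rw [map_inv₀, map_ofNat]
  rw [div_eq_mul_inv, mul_inv, mul_inv, ← inv_pow, ← prod_inv_distrib, h2]
  refine mul_mem (algebraMap_dropZ2_mem Q) (mul_mem (pow_mem (prod_mem fun i _ => ?_) M)
    (mul_mem (Subring.subset_closure (Or.inl (Or.inl (Or.inl ⟨_, rfl⟩)))) (zF_inv_mem zero_ne_one)))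
  exact inv_algebraMap_w_mem i

end ShEvalNegZ1

/-- Evaluation at `z2 = −z1`: for every `k ≥ 2` (written `k = m + 2`) and `d ∈ ℤ^k`, there is a
Laurent polynomial `c ∈ R[z1^{±1}, z3^{±1}, …, zk^{±1}]` with
`Sh_k(d)(z1, −z1, z3, …, zk) = (1 + q1)(1 + q2)(1 + q)·c`. -/
theorem sh_eval_neg_z1 (m : ℕ) (d : Fin (m + 2) → ℤ) :
    ∃ c : Fk (m + 2),
      c ∈ Subring.closure
        ((Set.range fun cc : ℂ => algebraMap ℂ (Fk (m + 2)) cc) ∪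
          {q1F (m + 2), (q1F (m + 2))⁻¹, q2F (m + 2), (q2F (m + 2))⁻¹} ∪
          (Set.range fun i : {i : Fin (m + 2) // i ≠ 1} => zF (m + 2) i.1) ∪
          (Set.range fun i : {i : Fin (m + 2) // i ≠ 1} => (zF (m + 2) i.1)⁻¹)) ∧
      Sh (q1F (m + 2)) (q2F (m + 2))
          (fun i => if i = 1 then -(zF (m + 2) 0) else zF (m + 2) i) d =
        (1 + q1F (m + 2)) * (1 + q2F (m + 2)) * (1 + q1F (m + 2) * q2F (m + 2)) * c := by
  obtain ⟨e, M, hde⟩ := exists_eq_natCast_sub_natCast d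
  obtain ⟨Q, hPQ⟩ := ShEvalNegZ1.exists_numer_eq_mul_dropZ2 e
  refine ⟨_, ShEvalNegZ1.algebraMap_dropZ2_div_mem Q M, ?_⟩
  rw [← ShEvalNegZ1.algebraMap_comp_w]
  exact ShEvalNegZ1.Sh_comp_w_eq hde hPQ

end
end
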